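/- Let (E,F) be a Maximum Online Set instance, let E' be the set of non-isolated elements of E, let k be the number of isolated elements, and let s(E',F) be the minimum size of a subset S ⊆ E' containing no forbidden subset such that adding any element of E' \ S to S yields a set containing a forbidden subset. If k + s(E',F) ≥ MS^O(E',F), then GMOS(E,F) = MS^O(E,F); that is, the greedy algorithm achieves the optimal worst-case number of accepted elements among all online algorithms. -/

import Mathlib

namespace OnlinePaper

noncomputable instance {α : Type} [Fintype α] {p : α → Prop} : Fintype {v : α // p v} :=
  Fintype.ofFinite _

/-- A deterministic online algorithm for Maximum Online Set: given the number `n` of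
previously revealed elements and, for each step `i ≤ n`, the predicate telling which
subsets `A` of the elements revealed before step `i` are such that `A` together with the
element revealed at step `i` forms a forbidden set, decide whether to accept the element
revealed at step `n`.  (Since the family of forbidden sets is closed under supersets, this
monotone predicate carries exactly the same information as the list of all minimal such
subsets `A`, which is what each request reveals.) -/
def MOSAlg : Type := (n : ℕ) → ((i : Fin (n + 1)) → Finset (Fin i.val) → Bool) → Bool

variable {E : Type}

/-- The information revealed up to step `n` when the elements arrive in the order `φ` and
the forbidden family is `F`. -/
noncomputable def mosHistory [Fintype E] [DecidableEq E] (F : Set (Finset E))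
    (φ : Fin (Fintype.card E) ≃ E) (n : Fin (Fintype.card E)) :
    (i : Fin (n.val + 1)) → Finset (Fin i.val) → Bool :=
  fun i A =>
    @decide ((insert (φ ⟨i.val, by have := i.isLt; have := n.isLt; omega⟩)
        (A.image (fun a => φ ⟨a.val, by
          have := a.isLt; have := i.isLt; have := n.isLt; omega⟩))) ∈ F)
      (Classical.propDecidable _)

/-- Whether the algorithm `A` accepts the element revealed at step `i`. -/
noncomputable def mosAccepts [Fintype E] [DecidableEq E] (A : MOSAlg) (F : Set (Finset E))
    (φ : Fin (Fintype.card E) ≃ E) (i : Fin (Fintype.card E)) : Bool :=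
  A i.val (mosHistory F φ i)

/-- The set of elements accepted by `A` when the elements arrive in the order `φ`. -/
noncomputable def mosAcceptedSet [Fintype E] [DecidableEq E] (A : MOSAlg)
    (F : Set (Finset E)) (φ : Fin (Fintype.card E) ≃ E) : Finset E :=
  Finset.univ.filter (fun e => mosAccepts A F φ (φ.symm e) = true)

/-- A solution is feasible if it contains no forbidden subset. -/
def MOSFeasible (F : Set (Finset E)) (s : Finset E) : Prop := ∀ B ∈ F, ¬ B ⊆ s

/-- The worst-case (minimum over orderings) number of elements accepted by `A`. -/
noncomputable def mosMinScore [Fintype E] [DecidableEq E] (A : MOSAlg)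
    (F : Set (Finset E)) : ℕ :=
  sInf {m | ∃ φ : Fin (Fintype.card E) ≃ E, (mosAcceptedSet A F φ).card = m}

/-- The optimal online value `MS^O(E, F)`: the largest `m` such that some online algorithm
accepts, on every ordering, a feasible set of at least `m` elements. -/
noncomputable def mosOnlineNum [Fintype E] [DecidableEq E] (F : Set (Finset E)) : ℕ :=
  sSup {m | ∃ A : MOSAlg, ∀ φ : Fin (Fintype.card E) ≃ E,
      MOSFeasible F (mosAcceptedSet A F φ) ∧ m ≤ (mosAcceptedSet A F φ).card}

/-- The greedy decision: accept the newly revealed element iff the set of elements accepted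
so far (by the same greedy rule) together with the new element contains no forbidden
subset. -/
def gmosAux : (n : ℕ) → ((i : Fin (n + 1)) → Finset (Fin i.val) → Bool) → Bool
  | n, H =>
    !(H (Fin.last n) (Finset.univ.filter (fun j : Fin n =>
      gmosAux j.val (fun i A => H ⟨i.val, by have := i.isLt; have := j.isLt; omega⟩ A)
        = true)))
termination_by n => n
decreasing_by all_goals exact Fin.isLt _

/-- `GMOS`, the greedy algorithm for Maximum Online Set. -/
def gmosAlg : MOSAlg := fun n H => gmosAux n H

/-- An element is isolated if it belongs to no forbidden set. -/
def MOSIsolated (F : Set (Finset E)) (e : E) : Prop := ∀ B ∈ F, e ∉ B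

/-- The instance `(E', F)` restricted to the non-isolated elements: the forbidden sets are
the members of `F` contained in `E'`. -/
def mosRestrict [DecidableEq E] (F : Set (Finset E)) :
    Set (Finset {e : E // ¬ MOSIsolated F e}) :=
  {B | B.image Subtype.val ∈ F}

/-- `s(E, F)`: the minimum size of a feasible set `S` such that adding any further element
to `S` yields a set containing a forbidden subset. -/
noncomputable def mosIndepDomNum [DecidableEq E] (F : Set (Finset E)) : ℕ :=
  sInf {m | ∃ S : Finset E, MOSFeasible F S ∧
    (∀ e ∉ S, ¬ MOSFeasible F (insert e S)) ∧ S.card = m}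

/-!
Since `F` is closed under supersets, either `∅ ∈ F` (nothing can ever be accepted, both sides
are `0`), or `F = ∅` (greedy accepts everything), or no element is isolated. In the last case
`k = 0` and `(E', F)` is just a relabelling of `(E, F)`, so the hypothesis reads `MS^O ≤ s`.
The greedy output is feasible (the last accepted element of a forbidden set would have been
rejected) and maximal (a rejected element completes a forbidden set with earlier acceptances),
so greedy accepts at least `s` elements on every ordering; being an online algorithm itself,
it accepts at most `MS^O`.
-/

section Greedy

variable [Fintype E] [DecidableEq E]

noncomputable def mosAcceptedBefore (A : MOSAlg) (F : Set (Finset E))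
    (φ : Fin (Fintype.card E) ≃ E) (i : Fin (Fintype.card E)) : Finset E :=
  (mosAcceptedSet A F φ).filter (fun e => φ.symm e < i)

theorem mosAccepts_gmosAlg_iff (F : Set (Finset E)) (φ : Fin (Fintype.card E) ≃ E)
    (i : Fin (Fintype.card E)) :
    mosAccepts gmosAlg F φ i = true ↔ insert (φ i) (mosAcceptedBefore gmosAlg F φ i) ∉ F := by
  have hbefore : ((Finset.univ.filter fun j : Fin i.val =>
      mosAccepts gmosAlg F φ ⟨j, j.isLt.trans i.isLt⟩ = true).image
        fun j : Fin i.val => φ ⟨j, j.isLt.trans i.isLt⟩) = mosAcceptedBefore gmosAlg F φ i := by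
    ext x
    simp only [mosAcceptedBefore, mosAcceptedSet, Finset.mem_image, Finset.mem_filter,
      Finset.mem_univ, true_and]
    constructor
    · rintro ⟨j, hj, rfl⟩
      simpa [Fin.lt_def] using hj
    · rintro ⟨hx, hxi⟩
      exact ⟨⟨φ.symm x, hxi⟩, hx, φ.apply_symm_apply x⟩
  -- One step of the greedy recursion; its recursive calls are, definitionally, the earlier
  -- decisions `mosAccepts gmosAlg F φ j`.
  change gmosAux i (mosHistory F φ i) = true ↔ _
  rw [gmosAux]
  change (!(@decide (insert (φ i) ((Finset.univ.filter fun j : Fin i.val =>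
      mosAccepts gmosAlg F φ ⟨j, j.isLt.trans i.isLt⟩ = true).image
        fun j : Fin i.val => φ ⟨j, j.isLt.trans i.isLt⟩) ∈ F) (Classical.propDecidable _)))
      = true ↔ _
  rw [hbefore, Bool.not_eq_true', decide_eq_false_iff_not]

theorem mosFeasible_mosAcceptedSet_gmosAlg {F : Set (Finset E)}
    (hF : ∀ B ∈ F, ∀ C : Finset E, B ⊆ C → C ∈ F) (h0 : ∅ ∉ F)
    (φ : Fin (Fintype.card E) ≃ E) : MOSFeasible F (mosAcceptedSet gmosAlg F φ) := by
  intro B hB hBG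
  obtain ⟨e, he, hmax⟩ := B.exists_max_image φ.symm
    (Finset.nonempty_iff_ne_empty.mpr fun hB0 => h0 (hB0 ▸ hB))
  have hacc : mosAccepts gmosAlg F φ (φ.symm e) = true := by
    simpa [mosAcceptedSet] using hBG he
  rw [mosAccepts_gmosAlg_iff, φ.apply_symm_apply] at hacc
  refine hacc (hF B hB _ fun x hx => ?_)
  rcases (hmax x hx).eq_or_lt with hxe | hxe
  · simp [φ.symm.injective hxe]
  · exact Finset.mem_insert_of_mem (Finset.mem_filter.mpr ⟨hBG hx, hxe⟩)

theorem insert_mem_of_notMem_mosAcceptedSet_gmosAlg {F : Set (Finset E)}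
    (hF : ∀ B ∈ F, ∀ C : Finset E, B ⊆ C → C ∈ F) (φ : Fin (Fintype.card E) ≃ E) {e : E}
    (he : e ∉ mosAcceptedSet gmosAlg F φ) : insert e (mosAcceptedSet gmosAlg F φ) ∈ F := by
  have hrej : ¬ mosAccepts gmosAlg F φ (φ.symm e) = true := by
    simpa [mosAcceptedSet] using he
  rw [mosAccepts_gmosAlg_iff, not_not, φ.apply_symm_apply] at hrej
  exact hF _ hrej _ (Finset.insert_subset_insert _ (Finset.filter_subset _ _))

end Greedy

section Scores

variable [Fintype E] [DecidableEq E]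

theorem mosMinScore_le (A : MOSAlg) (F : Set (Finset E)) (φ : Fin (Fintype.card E) ≃ E) :
    mosMinScore A F ≤ (mosAcceptedSet A F φ).card :=
  Nat.sInf_le ⟨φ, rfl⟩

theorem le_mosMinScore {A : MOSAlg} {F : Set (Finset E)} {m : ℕ}
    (h : ∀ φ, m ≤ (mosAcceptedSet A F φ).card) : m ≤ mosMinScore A F :=
  le_csInf ⟨_, (Fintype.equivFin E).symm, rfl⟩ (by rintro _ ⟨φ, rfl⟩; exact h φ)

theorem le_mosOnlineNum {F : Set (Finset E)} {m : ℕ} (A : MOSAlg)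
    (h : ∀ φ, MOSFeasible F (mosAcceptedSet A F φ) ∧ m ≤ (mosAcceptedSet A F φ).card) :
    m ≤ mosOnlineNum F :=
  le_csSup ⟨Fintype.card E, by
    rintro _ ⟨A', hA'⟩
    exact (hA' (Fintype.equivFin E).symm).2.trans (Finset.card_le_univ _)⟩ ⟨A, h⟩

theorem mosOnlineNum_le_card (F : Set (Finset E)) : mosOnlineNum F ≤ Fintype.card E :=
  csSup_le' <| by
    rintro _ ⟨A, hA⟩
    exact (hA (Fintype.equivFin E).symm).2.trans (Finset.card_le_univ _)

theorem mosOnlineNum_eq_zero_of_empty_mem {F : Set (Finset E)} (h0 : ∅ ∈ F) :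
    mosOnlineNum F = 0 :=
  Nat.eq_zero_of_le_zero <| csSup_le' <| by
    rintro _ ⟨A, hA⟩
    exact absurd (Finset.empty_subset _) ((hA (Fintype.equivFin E).symm).1 ∅ h0)

theorem mosMinScore_gmosAlg_eq_zero_of_empty_mem {F : Set (Finset E)}
    (hF : ∀ B ∈ F, ∀ C : Finset E, B ⊆ C → C ∈ F) (h0 : ∅ ∈ F) :
    mosMinScore gmosAlg F = 0 := by
  have hG : mosAcceptedSet gmosAlg F (Fintype.equivFin E).symm = ∅ := by
    refine Finset.eq_empty_of_forall_notMem fun e he => ?_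
    simp only [mosAcceptedSet, Finset.mem_filter, Finset.mem_univ, true_and,
      mosAccepts_gmosAlg_iff] at he
    exact he (hF ∅ h0 _ (Finset.empty_subset _))
  simpa [hG] using mosMinScore_le gmosAlg F (Fintype.equivFin E).symm

theorem mosMinScore_gmosAlg_empty :
    mosMinScore gmosAlg (∅ : Set (Finset E)) = Fintype.card E := by
  have hG (φ) : mosAcceptedSet gmosAlg (∅ : Set (Finset E)) φ = Finset.univ := by
    ext e
    simp [mosAcceptedSet, mosAccepts_gmosAlg_iff]
  refine le_antisymm ?_ (le_mosMinScore fun φ => by rw [hG]; rfl)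
  simpa [hG] using mosMinScore_le gmosAlg ∅ (Fintype.equivFin E).symm

theorem mosMinScore_gmosAlg_le_mosOnlineNum {F : Set (Finset E)}
    (hF : ∀ B ∈ F, ∀ C : Finset E, B ⊆ C → C ∈ F) (h0 : ∅ ∉ F) :
    mosMinScore gmosAlg F ≤ mosOnlineNum F :=
  le_mosOnlineNum gmosAlg fun φ =>
    ⟨mosFeasible_mosAcceptedSet_gmosAlg hF h0 φ, mosMinScore_le gmosAlg F φ⟩

theorem mosIndepDomNum_le_mosMinScore_gmosAlg {F : Set (Finset E)}
    (hF : ∀ B ∈ F, ∀ C : Finset E, B ⊆ C → C ∈ F) (h0 : ∅ ∉ F) :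
    mosIndepDomNum F ≤ mosMinScore gmosAlg F :=
  le_mosMinScore fun φ => Nat.sInf_le ⟨_, mosFeasible_mosAcceptedSet_gmosAlg hF h0 φ,
    fun _ he hfeas => hfeas _ (insert_mem_of_notMem_mosAcceptedSet_gmosAlg hF φ he) subset_rfl,
    rfl⟩

end Scores

section Relabel

variable [Fintype E] [DecidableEq E] {E' : Type} [Fintype E'] [DecidableEq E'] (e : E' ≃ E)

def relabelOrder (φ' : Fin (Fintype.card E') ≃ E') : Fin (Fintype.card E) ≃ E :=
  (finCongr (Fintype.card_congr e).symm).trans (φ'.trans e)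

variable {e} {F : Set (Finset E)} {G : Set (Finset E')}

theorem mosAccepts_relabel (hG : ∀ B, B ∈ G ↔ B.image e ∈ F) (A : MOSAlg)
    (φ' : Fin (Fintype.card E') ≃ E') (i : Fin (Fintype.card E')) :
    mosAccepts A G φ' i =
      mosAccepts A F (relabelOrder e φ') (finCongr (Fintype.card_congr e) i) := by
  unfold mosAccepts
  congr 1
  funext j B
  unfold mosHistory
  rw [decide_eq_decide, hG]
  simp only [Finset.image_insert, Finset.image_image]
  rfl

theorem image_mosAcceptedSet_relabel (hG : ∀ B, B ∈ G ↔ B.image e ∈ F) (A : MOSAlg)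
    (φ' : Fin (Fintype.card E') ≃ E') :
    (mosAcceptedSet A G φ').image e = mosAcceptedSet A F (relabelOrder e φ') := by
  ext x
  simp only [Finset.mem_image, mosAcceptedSet, Finset.mem_filter, Finset.mem_univ, true_and,
    mosAccepts_relabel hG]
  constructor
  · rintro ⟨x', hx', rfl⟩
    simpa [relabelOrder] using hx'
  · intro hx
    exact ⟨e.symm x, by simpa [relabelOrder] using hx, e.apply_symm_apply x⟩

theorem card_mosAcceptedSet_relabel (hG : ∀ B, B ∈ G ↔ B.image e ∈ F) (A : MOSAlg)
    (φ' : Fin (Fintype.card E') ≃ E') :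
    (mosAcceptedSet A G φ').card = (mosAcceptedSet A F (relabelOrder e φ')).card := by
  rw [← image_mosAcceptedSet_relabel hG, Finset.card_image_of_injective _ e.injective]

theorem mosOnlineNum_le_relabel (hG : ∀ B, B ∈ G ↔ B.image e ∈ F) :
    mosOnlineNum F ≤ mosOnlineNum G :=
  csSup_le' <| by
    rintro m ⟨A, hA⟩
    refine le_mosOnlineNum A fun φ' => ?_
    obtain ⟨hfeas, hm⟩ := hA (relabelOrder e φ')
    rw [← image_mosAcceptedSet_relabel hG] at hfeas
    exact ⟨fun B hB hBS => hfeas _ ((hG B).mp hB) (Finset.image_subset_image hBS),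
      hm.trans_eq (card_mosAcceptedSet_relabel hG A φ').symm⟩

theorem mosMinScore_le_relabel (hG : ∀ B, B ∈ G ↔ B.image e ∈ F) (A : MOSAlg) :
    mosMinScore A F ≤ mosMinScore A G :=
  le_mosMinScore fun φ' =>
    (mosMinScore_le A F (relabelOrder e φ')).trans_eq (card_mosAcceptedSet_relabel hG A φ').symm

end Relabel

section Restrict

variable [DecidableEq E] {F : Set (Finset E)}

theorem not_isolated_of_mem (hF : ∀ B ∈ F, ∀ C : Finset E, B ⊆ C → C ∈ F) {B : Finset E}
    (hB : B ∈ F) (x : E) : ¬ MOSIsolated F x :=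
  fun hx => hx _ (hF B hB _ (Finset.subset_insert x B)) (Finset.mem_insert_self x B)

theorem mosRestrict_upward (hF : ∀ B ∈ F, ∀ C : Finset E, B ⊆ C → C ∈ F) :
    ∀ B ∈ mosRestrict F, ∀ C, B ⊆ C → C ∈ mosRestrict F :=
  fun _ hB _ hBC => hF _ hB _ (Finset.image_subset_image hBC)

theorem empty_notMem_mosRestrict (h0 : ∅ ∉ F) : ∅ ∉ mosRestrict F := by
  simpa [mosRestrict] using h0

end Restrict

/-- for a Maximum Online Set instance `(E, F)` with `F` closed under
supersets, if `k + s(E', F) ≥ MS^O(E', F)` — where `k` is the number of isolated elements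
and `E'` the set of non-isolated elements — then the greedy algorithm achieves the optimal
worst-case number of accepted elements: `GMOS(E, F) = MS^O(E, F)`. -/
theorem statement19 {E : Type} [Fintype E] [DecidableEq E] (F : Set (Finset E))
    (hF : ∀ B ∈ F, ∀ C : Finset E, B ⊆ C → C ∈ F)
    (h : mosOnlineNum (mosRestrict F) ≤
      Nat.card {e : E // MOSIsolated F e} + mosIndepDomNum (mosRestrict F)) :
    mosMinScore gmosAlg F = mosOnlineNum F := by
  by_cases h0 : ∅ ∈ F
  · rw [mosMinScore_gmosAlg_eq_zero_of_empty_mem hF h0, mosOnlineNum_eq_zero_of_empty_mem h0]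
  refine le_antisymm (mosMinScore_gmosAlg_le_mosOnlineNum hF h0) ?_
  obtain rfl | ⟨B, hB⟩ := F.eq_empty_or_nonempty
  · exact (mosOnlineNum_le_card _).trans mosMinScore_gmosAlg_empty.ge
  have hni (x : E) : ¬ MOSIsolated F x := not_isolated_of_mem hF hB x
  have hk : Nat.card {x : E // MOSIsolated F x} = 0 :=
    @Nat.card_of_isEmpty _ ⟨fun x => hni x.1 x.2⟩
  let e := Equiv.subtypeUnivEquiv hni
  have hback (C : Finset E) : C ∈ F ↔ C.image e.symm ∈ mosRestrict F := by
    simp [mosRestrict, Finset.image_image, e, Function.comp_def]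
  calc mosOnlineNum F ≤ mosOnlineNum (mosRestrict F) :=
        mosOnlineNum_le_relabel (e := e) fun _ => Iff.rfl
    _ ≤ mosIndepDomNum (mosRestrict F) := by rwa [hk, zero_add] at h
    _ ≤ mosMinScore gmosAlg (mosRestrict F) :=
        mosIndepDomNum_le_mosMinScore_gmosAlg (mosRestrict_upward hF)
          (empty_notMem_mosRestrict h0)
    _ ≤ mosMinScore gmosAlg F := mosMinScore_le_relabel hback gmosAlg

end OnlinePaper
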